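/- Let y : [0,T] → [0,∞) be absolutely continuous and satisfy y'(t) + a(t) ≤ c y(t)³ a.e. with a(t) ≥ 0 measurable. Then for the function 1/(1+y(t)): 1/(1+y(0)) − 1/(1+y(T)) + ∫₀ᵀ a(t)/(1+y(t))² dt ≤ c ∫₀ᵀ y(t) dt. -/

import Mathlib

/-!
With `g = -1/(1+y)` we have `g' = y'/(1+y)² ≤ c y³/(1+y)² - a/(1+y)² ≤ c y - a/(1+y)²` a.e.,
since `y³ ≤ y (1+y)²` for `y ≥ 0`; integrating this bound on `g'` over `[0,T]` gives the claim.
-/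

open MeasureTheory Set

theorem sub_le_setIntegral_Icc_of_hasDeriv_right_of_ae_le {g g' φ : ℝ → ℝ} {a b : ℝ}
    (hab : a ≤ b) (hcont : ContinuousOn g (Icc a b))
    (hderiv : ∀ x ∈ Ioo a b, HasDerivWithinAt g (g' x) (Ioi x) x)
    (φint : IntegrableOn φ (Icc a b)) (hφg : ∀ᵐ x ∂volume.restrict (Icc a b), g' x ≤ φ x) :
    g b - g a ≤ ∫ x in Icc a b, φ x := by
  -- `max g' φ` agrees with `φ` off a null set and bounds `g'` everywhere.
  have hmax : (fun x => max (g' x) (φ x)) =ᵐ[volume.restrict (Icc a b)] φ := by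
    filter_upwards [hφg] with x hx using max_eq_right hx
  calc g b - g a ≤ ∫ x in a..b, max (g' x) (φ x) :=
        intervalIntegral.sub_le_integral_of_hasDeriv_right_of_le hab hcont hderiv
          (φint.congr hmax.symm) fun x _ => le_max_left _ _
    _ = ∫ x in Icc a b, φ x := by
        rw [intervalIntegral.integral_of_le hab, ← integral_Icc_eq_integral_Ioc,
          integral_congr_ae hmax]

theorem div_one_add_sq_le_of_add_le_mul_cube {y y' a c : ℝ} (hy : 0 ≤ y) (hc : 0 ≤ c)
    (h : y' + a ≤ c * y ^ 3) : y' / (1 + y) ^ 2 ≤ c * y - a / (1 + y) ^ 2 := by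
  rw [le_sub_iff_add_le, ← add_div, div_le_iff₀ (by positivity)]
  nlinarith [mul_nonneg hc hy, mul_nonneg (mul_nonneg hc hy) hy]

theorem stmt5_general (T c : ℝ) (hT : 0 < T) (hc : 0 ≤ c)
    (y y' a : ℝ → ℝ)
    (hy0 : ∀ t ∈ Set.Icc 0 T, 0 ≤ y t)
    (hy' : ∀ t ∈ Set.Icc 0 T, HasDerivAt y (y' t) t)
    (haint : IntegrableOn (fun t => a t / (1 + y t) ^ 2) (Set.Icc 0 T))
    (hineq : ∀ᵐ t ∂(volume.restrict (Set.Icc 0 T)), y' t + a t ≤ c * y t ^ 3) :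
    1 / (1 + y 0) - 1 / (1 + y T) +
      (∫ t in Set.Icc 0 T, a t / (1 + y t) ^ 2) ≤ c * ∫ t in Set.Icc 0 T, y t := by
  have hcyint : IntegrableOn (fun t => c * y t) (Icc 0 T) :=
    (ContinuousOn.integrableOn_Icc fun t ht => (hy' t ht).continuousAt.continuousWithinAt).const_mul c
  have hderiv : ∀ t ∈ Icc 0 T,
      HasDerivAt (fun s => -(1 + y s)⁻¹) (y' t / (1 + y t) ^ 2) t := fun t ht =>
    (((hy' t ht).const_add 1).inv (add_pos_of_pos_of_nonneg one_pos (hy0 t ht)).ne').neg.congr_deriv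
      (by ring)
  have hbound := sub_le_setIntegral_Icc_of_hasDeriv_right_of_ae_le
    (φ := fun t => c * y t - a t / (1 + y t) ^ 2) hT.le
    (fun t ht => (hderiv t ht).continuousAt.continuousWithinAt)
    (fun t ht => (hderiv t (Ioo_subset_Icc_self ht)).hasDerivWithinAt) (hcyint.sub haint)
    (by
      filter_upwards [hineq, ae_restrict_mem measurableSet_Icc] with t h ht
      exact div_one_add_sq_le_of_add_le_mul_cube (hy0 t ht) hc h)
  rw [integral_sub hcyint haint, integral_const_mul] at hbound
  simp only [one_div]
  linarith

/-- if `y ≥ 0` is absolutely continuous with `y' + a ≤ c y³` a.e. and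
`a ≥ 0`, then `1/(1+y(0)) − 1/(1+y(T)) + ∫₀ᵀ a/(1+y)² ≤ c ∫₀ᵀ y`. -/
theorem stmt5 (T c : ℝ) (hT : 0 < T) (hc : 0 ≤ c)
    (y y' a : ℝ → ℝ)
    (hy0 : ∀ t ∈ Set.Icc 0 T, 0 ≤ y t)
    (hy' : ∀ t ∈ Set.Icc 0 T, HasDerivAt y (y' t) t)
    (hy'int : IntegrableOn y' (Set.Icc 0 T))
    (hyint : IntegrableOn y (Set.Icc 0 T))
    (ham : Measurable a) (ha0 : ∀ t, 0 ≤ a t)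
    (haint : IntegrableOn (fun t => a t / (1 + y t) ^ 2) (Set.Icc 0 T))
    (hineq : ∀ᵐ t ∂(volume.restrict (Set.Icc 0 T)), y' t + a t ≤ c * y t ^ 3) :
    1 / (1 + y 0) - 1 / (1 + y T) +
      (∫ t in Set.Icc 0 T, a t / (1 + y t) ^ 2) ≤ c * ∫ t in Set.Icc 0 T, y t :=
  stmt5_general T c hT hc y y' a hy0 hy' haint hineq
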